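/- arXiv:2405.20753 — 8 statements merged into one kernel-verified Lean document; each statement's English description precedes it below -/
import Mathlib

section
/- There exists a strong bimonoid B = (B,⊕,⊗,0,1) which is almost idempotent, right-distributive, and weakly locally finite, but not locally finite. -/
/-- A strong bimonoid: `(B,+,0)` a commutative monoid, `(B,*,1)` a monoid,
and `0` annihilating for `*`. -/
class StrongBimonoid (B : Type*) extends AddCommMonoid B, MonoidWithZero B

section Defs

variable {B : Type*} [StrongBimonoid B]

/-- The closure `⟨A⟩_{⊕,⊗,0,1}` of a subset `A`: the smallest subset of `B`
containing `A ∪ {0,1}` and closed under `+` and `*`. -/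
inductive SBClosure (A : Set B) : B → Prop
  | base {a : B} : a ∈ A → SBClosure A a
  | zero : SBClosure A 0
  | one : SBClosure A 1
  | add {a b : B} : SBClosure A a → SBClosure A b → SBClosure A (a + b)
  | mul {a b : B} : SBClosure A a → SBClosure A b → SBClosure A (a * b)

/-- `B` is locally finite if the closure of each finite subset is finite. -/
def SBLocallyFinite (B : Type*) [StrongBimonoid B] : Prop :=
  ∀ A : Set B, A.Finite → {b : B | SBClosure A b}.Finite

/-- The weak closure `wcl(A)`: the smallest subset containing `A ∪ {0,1}` closed
under addition and under multiplication on the right by elements of `A`. -/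
inductive WeakClosure (A : Set B) : B → Prop
  | base {a : B} : a ∈ A → WeakClosure A a
  | zero : WeakClosure A 0
  | one : WeakClosure A 1
  | add {b b' : B} : WeakClosure A b → WeakClosure A b' → WeakClosure A (b + b')
  | mulr {b a : B} : WeakClosure A b → a ∈ A → WeakClosure A (b * a)

/-- `B` is weakly locally finite if the weak closure of each finite subset is finite. -/
def WeaklyLocallyFinite (B : Type*) [StrongBimonoid B] : Prop :=
  ∀ A : Set B, A.Finite → {b : B | WeakClosure A b}.Finite

/-- `B` is additively locally finite if each finitely generated submonoid of `(B,+,0)` is finite. -/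
def AddLocallyFinite (B : Type*) [StrongBimonoid B] : Prop :=
  ∀ A : Set B, A.Finite → ((AddSubmonoid.closure A : AddSubmonoid B) : Set B).Finite

/-- `B` is multiplicatively locally finite if each finitely generated submonoid of `(B,*,1)` is finite. -/
def MulLocallyFinite (B : Type*) [StrongBimonoid B] : Prop :=
  ∀ A : Set B, A.Finite → ((Submonoid.closure A : Submonoid B) : Set B).Finite

/-- `B` is bi-locally finite if it is additively and multiplicatively locally finite. -/
def BiLocallyFinite (B : Type*) [StrongBimonoid B] : Prop :=
  AddLocallyFinite B ∧ MulLocallyFinite B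

/-- `B` is almost idempotent if `b + b + b = b + b` for all `b`. -/
def AlmostIdempotent (B : Type*) [StrongBimonoid B] : Prop :=
  ∀ b : B, b + b + b = b + b

/-- right-distributivity -/
def SBRightDistributive (B : Type*) [StrongBimonoid B] : Prop :=
  ∀ a b c : B, (a + b) * c = a * c + b * c

/-- left-distributivity -/
def SBLeftDistributive (B : Type*) [StrongBimonoid B] : Prop :=
  ∀ a b c : B, a * (b + c) = a * b + a * c

end Defs

/-!
Take finite sets of naturals with union as `⊕`, `∅` as `0` and `{0}` as `1`, and let `X ⊗ Y` be
the union over `x ∈ X` of `x • Y`, which makes `⊗` right-distributive. When `Y ⊈ {0}`, `x • Y` is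
`Y` for `x = 0` and `τ Y` otherwise, where `τ Y` adds `2c + 1` to a set `Y` of size `c` unless
`2c - 1 ∈ Y`; the result contains `2(c + 1) - 1`, so `τ` is idempotent. Hence `X ⊗ Y = τ Y`
whenever `X, Y ⊈ {0}`, which gives associativity.

Since `X ⊗ a ⊆ X ∪ τ a`, the weak closure of a finite `A` consists of subsets of the finite set
`{0} ∪ ⋃_{a ∈ A} τ a`. On the left, `a = {2, 4}` keeps producing new elements: the sets
`Sₙ = {0, 2, 4} ∪ {5, 7, …, 2n + 3}` satisfy `Sₙ₊₂ = Sₙ₊₁ ⊕ a ⊗ Sₙ`, so `⟨{a}⟩` is infinite.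
-/

theorem WeakClosure.subset_of_closed {B : Type*} [StrongBimonoid B] {A C : Set B}
    (hA : A ⊆ C) (h0 : (0 : B) ∈ C) (h1 : (1 : B) ∈ C)
    (hadd : ∀ b ∈ C, ∀ b' ∈ C, b + b' ∈ C) (hmul : ∀ b ∈ C, ∀ a ∈ A, b * a ∈ C) :
    {b | WeakClosure A b} ⊆ C := by
  intro b hb
  induction hb with
  | base ha => exact hA ha
  | zero => exact h0
  | one => exact h1
  | add _ _ ih ih' => exact hadd _ ih _ ih'
  | mulr _ ha ih => exact hmul _ ih _ ha

namespace FinsetBimonoid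

def tau (Y : Finset ℕ) : Finset ℕ :=
  if 2 * Y.card - 1 ∈ Y then Y else insert (2 * Y.card + 1) Y

theorem subset_tau (Y : Finset ℕ) : Y ⊆ tau Y := by
  unfold tau
  split
  · exact Finset.Subset.refl Y
  · exact Finset.subset_insert _ Y

theorem tau_tau (Y : Finset ℕ) : tau (tau Y) = tau Y := by
  by_cases hfix : 2 * Y.card - 1 ∈ Y
  · simp only [tau, hfix, if_true]
  by_cases hnew : 2 * Y.card + 1 ∈ Y
  · simp only [tau, hfix, if_false, Finset.insert_eq_self.2 hnew]
  have hcard : (tau Y).card = Y.card + 1 := by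
    rw [tau, if_neg hfix, Finset.card_insert_of_notMem hnew]
  have hmem : 2 * (tau Y).card - 1 ∈ tau Y := by
    rw [hcard, show 2 * (Y.card + 1) - 1 = 2 * Y.card + 1 by omega, tau, if_neg hfix]
    exact Finset.mem_insert_self _ Y
  rw [tau, if_pos hmem]

theorem tau_not_subset {Y : Finset ℕ} (hY : ¬Y ⊆ {0}) : ¬tau Y ⊆ {0} :=
  fun h => hY ((subset_tau Y).trans h)

def pointMul (x : ℕ) (Y : Finset ℕ) : Finset ℕ :=
  if Y = ∅ then ∅ else if Y = {0} then {x} else if x = 0 then Y else tau Y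

def bmul (X Y : Finset ℕ) : Finset ℕ := X.biUnion (pointMul · Y)

theorem empty_bmul (Y : Finset ℕ) : bmul ∅ Y = ∅ := Finset.biUnion_empty

theorem bmul_empty (X : Finset ℕ) : bmul X ∅ = ∅ := by
  ext
  simp [bmul, pointMul]

theorem singleton_zero_bmul (Y : Finset ℕ) : bmul {0} Y = Y := by
  rw [bmul, Finset.singleton_biUnion, pointMul]
  split_ifs <;> simp_all

theorem bmul_singleton_zero (X : Finset ℕ) : bmul X {0} = X := by
  simp [bmul, pointMul]

theorem bmul_subset_union_tau (X Y : Finset ℕ) : bmul X Y ⊆ X ∪ tau Y := by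
  refine Finset.biUnion_subset.2 fun x hx => ?_
  unfold pointMul
  split_ifs
  · exact Finset.empty_subset _
  · exact Finset.singleton_subset_iff.2 (Finset.mem_union_left _ hx)
  · exact (subset_tau Y).trans Finset.subset_union_right
  · exact Finset.subset_union_right

theorem bmul_eq_tau {X Y : Finset ℕ} (hX : ¬X ⊆ {0}) (hY : ¬Y ⊆ {0}) :
    bmul X Y = tau Y := by
  have hY' : Y ≠ ∅ ∧ Y ≠ {0} := by simpa [Finset.subset_singleton_iff, not_or] using hY
  have hpoint (x : ℕ) : pointMul x Y = if x = 0 then Y else tau Y := by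
    simp only [pointMul, hY'.1, hY'.2, if_false]
  obtain ⟨x, hx, hx0⟩ := Finset.not_subset.1 hX
  refine (Finset.biUnion_subset.2 fun x _ => ?_).antisymm
    (Finset.subset_biUnion_of_mem (pointMul · Y) hx |>.trans' ?_)
  · rw [hpoint]
    split
    · exact subset_tau Y
    · exact Finset.Subset.refl _
  · rw [hpoint, if_neg (by simpa using hx0)]

theorem bmul_assoc (X Y Z : Finset ℕ) : bmul (bmul X Y) Z = bmul X (bmul Y Z) := by
  by_cases hX : X ⊆ {0}
  · rcases Finset.subset_singleton_iff.1 hX with rfl | rfl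
    · simp only [empty_bmul]
    · simp only [singleton_zero_bmul]
  by_cases hY : Y ⊆ {0}
  · rcases Finset.subset_singleton_iff.1 hY with rfl | rfl
    · simp only [bmul_empty, empty_bmul]
    · simp only [bmul_singleton_zero, singleton_zero_bmul]
  by_cases hZ : Z ⊆ {0}
  · rcases Finset.subset_singleton_iff.1 hZ with rfl | rfl
    · simp only [bmul_empty]
    · simp only [bmul_singleton_zero]
  rw [bmul_eq_tau hX hY, bmul_eq_tau hY hZ, bmul_eq_tau (tau_not_subset hY) hZ,
    bmul_eq_tau hX (tau_not_subset hZ), tau_tau]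

scoped instance bimonoid : StrongBimonoid (Finset ℕ) where
  add := (· ∪ ·)
  add_assoc := Finset.union_assoc
  zero := ∅
  zero_add := Finset.empty_union
  add_zero := Finset.union_empty
  add_comm := Finset.union_comm
  nsmul := @nsmulRec _ ⟨∅⟩ ⟨(· ∪ ·)⟩
  nsmul_zero _ := rfl
  nsmul_succ _ _ := rfl
  mul := bmul
  mul_assoc := bmul_assoc
  one := {0}
  one_mul := singleton_zero_bmul
  mul_one := bmul_singleton_zero
  zero_mul := empty_bmul
  mul_zero := bmul_empty

theorem add_eq_union (X Y : Finset ℕ) : X + Y = X ∪ Y := rfl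

theorem mul_eq_bmul (X Y : Finset ℕ) : X * Y = bmul X Y := rfl

theorem almostIdempotent : AlmostIdempotent (Finset ℕ) := fun _ => by
  simp only [add_eq_union, Finset.union_self]

theorem rightDistributive : SBRightDistributive (Finset ℕ) := fun _ _ _ => by
  simp only [add_eq_union, mul_eq_bmul, bmul, Finset.union_biUnion]

theorem weaklyLocallyFinite : WeaklyLocallyFinite (Finset ℕ) := by
  intro A hA
  set U : Finset ℕ := insert 0 (hA.toFinset.biUnion tau)
  have htau : ∀ a ∈ A, tau a ⊆ U := fun a ha =>
    (Finset.subset_biUnion_of_mem tau (hA.mem_toFinset.2 ha)).trans (Finset.subset_insert 0 _)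
  have hclosed : {b | WeakClosure A b} ⊆ {X | X ⊆ U} :=
    WeakClosure.subset_of_closed (fun a ha => (subset_tau a).trans (htau a ha))
      (Finset.empty_subset U) (Finset.singleton_subset_iff.2 (Finset.mem_insert_self 0 _))
      (fun _ hb _ hb' => Finset.union_subset hb hb')
      (fun b hb a ha => (bmul_subset_union_tau b a).trans (Finset.union_subset hb (htau a ha)))
  exact U.powerset.finite_toSet.subset fun X hX => Finset.mem_powerset.2 (hclosed hX)

def S : ℕ → Finset ℕ
  | 0 => {0, 2, 4}
  | n + 1 => insert (2 * n + 5) (S n)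

theorem lt_of_mem_S {n x : ℕ} (hx : x ∈ S n) : x < 2 * n + 5 := by
  induction n with
  | zero => simp only [S, Finset.mem_insert, Finset.mem_singleton] at hx; omega
  | succ n ih =>
    rcases Finset.mem_insert.1 hx with rfl | hx
    · omega
    · have := ih hx; omega

theorem card_S (n : ℕ) : (S n).card = n + 3 := by
  induction n with
  | zero => rfl
  | succ n ih =>
    rw [S, Finset.card_insert_of_notMem fun h => (lt_of_mem_S h).false, ih]

theorem tau_S (n : ℕ) : tau (S n) = insert (2 * n + 7) (S n) := by
  have hout : 2 * (S n).card - 1 ∉ S n := fun h => by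
    have := lt_of_mem_S h; rw [card_S] at this; omega
  rw [tau, if_neg hout, card_S, show 2 * (n + 3) + 1 = 2 * n + 7 by ring]

theorem S_add_two (n : ℕ) : S (n + 2) = S (n + 1) + tau (S n) := by
  rw [add_eq_union, tau_S, S, S, show 2 * (n + 1) + 5 = 2 * n + 7 by ring]
  ext x
  simp only [Finset.mem_insert, Finset.mem_union]
  tauto

theorem S_not_subset (n : ℕ) : ¬S n ⊆ {0} := fun h => by
  simpa [card_S] using Finset.card_le_card h

theorem sbClosure_S (n : ℕ) : SBClosure {({2, 4} : Finset ℕ)} (S n) := by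
  have ha : SBClosure {({2, 4} : Finset ℕ)} {2, 4} := .base rfl
  have h0 : SBClosure {({2, 4} : Finset ℕ)} (S 0) :=
    (show (1 : Finset ℕ) + {2, 4} = S 0 by decide) ▸ .add .one ha
  induction n using Nat.twoStepInduction with
  | zero => exact h0
  | one => exact (show S 0 + {2, 4} * {2, 4} = S 1 by decide) ▸ .add h0 (.mul ha ha)
  | more n ih ih' =>
    rw [S_add_two, ← bmul_eq_tau (X := {2, 4}) (by decide) (S_not_subset n)]
    exact .add ih' (.mul ha ih)

theorem S_injective : Function.Injective S := fun m n hmn => by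
  simpa [card_S] using congrArg Finset.card hmn

theorem not_locallyFinite : ¬SBLocallyFinite (Finset ℕ) := fun h =>
  Set.infinite_of_injective_forall_mem S_injective sbClosure_S (h _ (Set.finite_singleton _))

end FinsetBimonoid

/-- There exists a strong bimonoid which is almost idempotent, right-distributive,
and weakly locally finite, but not locally finite. -/
theorem statement0 :
    ∃ (B : Type) (inst : StrongBimonoid B),
      @AlmostIdempotent B inst ∧ @SBRightDistributive B inst ∧
      @WeaklyLocallyFinite B inst ∧ ¬ @SBLocallyFinite B inst :=
  ⟨Finset ℕ, FinsetBimonoid.bimonoid, FinsetBimonoid.almostIdempotent,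
    FinsetBimonoid.rightDistributive, FinsetBimonoid.weaklyLocallyFinite,
    FinsetBimonoid.not_locallyFinite⟩
end

section
/- Let Σ be a ranked alphabet which contains a binary symbol, let B=(B,⊕,⊗,0,1) be a strong bimonoid, and let A⊆B be a finite subset. Then there exists a (Σ,B)-weighted tree automaton 𝒜 such that the image of its initial algebra semantics satisfies im(⟦𝒜⟧_init) = ⟨A⟩_{⊕,⊗,0,1}. In particular, if B is generated by A (i.e., ⟨A⟩_{⊕,⊗,0,1}=B), then im(⟦𝒜⟧_init) = B. -/
/-- A ranked alphabet: a finite nonempty set of symbols with a rank map,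
having at least one nullary symbol. -/
structure RankedAlphabet where
  symb : Type
  fintype_symb : Fintype symb
  nonempty_symb : Nonempty symb
  rk : symb → ℕ
  exists_nullary : ∃ σ, rk σ = 0

attribute [instance] RankedAlphabet.fintype_symb RankedAlphabet.nonempty_symb

/-- Trees (ground terms) over a ranked alphabet. -/
inductive RTree (S : RankedAlphabet) : Type
  | node (σ : S.symb) (ts : Fin (S.rk σ) → RTree S) : RTree S

/-- A weighted tree automaton over the ranked alphabet `S` and the strong bimonoid `B`. -/
structure WTA (S : RankedAlphabet) (B : Type) [StrongBimonoid B] where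
  Q : Type
  fintypeQ : Fintype Q
  nonemptyQ : Nonempty Q
  δ : (σ : S.symb) → (Fin (S.rk σ) → Q) → Q → B
  F : Q → B

attribute [instance] WTA.fintypeQ WTA.nonemptyQ

variable {S : RankedAlphabet} {B : Type} [StrongBimonoid B]

/-- The vector `h_𝒜(t) ∈ B^Q`:
`h_𝒜(σ(t_1,…,t_k))_q = ⊕_{q_1⋯q_k ∈ Q^k} (⊗_i h_𝒜(t_i)_{q_i}) ⊗ δ_k(q_1⋯q_k,σ,q)`. -/
def WTA.h (M : WTA S B) : RTree S → M.Q → B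
  | .node σ ts => fun q =>
      ∑ qs : Fin (S.rk σ) → M.Q,
        (((List.finRange (S.rk σ)).map (fun i => M.h (ts i) (qs i))).prod) * M.δ σ qs q

/-- The initial algebra semantics `⟦𝒜⟧_init(t) = ⊕_{q ∈ Q} h_𝒜(t)_q ⊗ F_q`. -/
noncomputable def WTA.initSem (M : WTA S B) (t : RTree S) : B :=
  ∑ q, M.h t q * M.F q


/-!
Every element of `⟨A⟩` is obtained from the generators `0`, `1` and `a ∈ A` by finitely many
`+` and `*`, and such a term is mirrored by a tree over one nullary symbol `α` and one binary
symbol `β`. The value is read off a state `val`: a run of `val` on `β(t₀, t₁)` multiplies the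
values of `t₀` and `t₁`; a run through an auxiliary state `sum` adds them, and is passed on to
`val` when the right child is the leaf `α`; and on `β(α, comb j)` a run reads off the `j`-th
generator, `comb j` being recognised by a chain of counter states. Since `B` need not be
distributive, the rules are arranged so that on the trees used all other runs have weight `0`.
Conversely all weights of the automaton lie in `⟨A⟩`, which is closed under the sums and
products that define `h`.
-/

namespace SBClosure

variable {A : Set B}

theorem list_prod : ∀ l : List B, (∀ x ∈ l, SBClosure A x) → SBClosure A l.prod
  | [], _ => one
  | x :: xs, h => by
    rw [List.prod_cons]
    exact (h x List.mem_cons_self).mul (list_prod xs fun y hy => h y (List.mem_cons_of_mem x hy))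

theorem sum {ι : Type*} (s : Finset ι) (f : ι → B) (h : ∀ i ∈ s, SBClosure A (f i)) :
    SBClosure A (∑ i ∈ s, f i) :=
  Finset.sum_induction f (SBClosure A) (fun _ _ => add) zero h

end SBClosure

def RTree.leaf (σ : S.symb) (hσ : S.rk σ = 0) : RTree S :=
  .node σ fun i => (i.cast hσ).elim0

def RTree.node₂ (σ : S.symb) (hσ : S.rk σ = 2) (t₀ t₁ : RTree S) : RTree S :=
  .node σ fun i => ![t₀, t₁] (i.cast hσ)

namespace WTA

variable (M : WTA S B)

theorem h_mem_sbClosure {A : Set B} (hδ : ∀ σ qs q, SBClosure A (M.δ σ qs q))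
    (t : RTree S) (q : M.Q) : SBClosure A (M.h t q) := by
  induction t generalizing q with
  | node σ ts ih =>
    refine SBClosure.sum _ _ fun qs _ => .mul (SBClosure.list_prod _ fun x hx => ?_) (hδ σ qs q)
    obtain ⟨i, -, rfl⟩ := List.mem_map.mp hx
    exact ih i (qs i)

theorem initSem_eq_h {q₀ : M.Q} (hF₀ : M.F q₀ = 1) (hF : ∀ q ≠ q₀, M.F q = 0)
    (t : RTree S) : M.initSem t = M.h t q₀ := by
  rw [initSem, Fintype.sum_eq_single q₀ fun q hq => by rw [hF q hq, mul_zero], hF₀, mul_one]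

theorem h_eq_one {q₀ : M.Q} (hδ₁ : ∀ σ, M.δ σ (fun _ => q₀) q₀ = 1)
    (hδ₀ : ∀ σ qs, qs ≠ (fun _ => q₀) → M.δ σ qs q₀ = 0) (t : RTree S) :
    M.h t q₀ = 1 := by
  induction t with
  | node σ ts ih =>
    simp only [WTA.h]
    rw [Fintype.sum_eq_single (fun _ => q₀) fun qs hqs => by rw [hδ₀ σ qs hqs, mul_zero],
      hδ₁, mul_one]
    exact List.prod_eq_one fun x hx => by
      obtain ⟨i, -, rfl⟩ := List.mem_map.mp hx
      exact ih i

theorem h_leaf {σ : S.symb} (hσ : S.rk σ = 0) (q : M.Q) :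
    M.h (.leaf σ hσ) q = M.δ σ (fun i => (i.cast hσ).elim0) q := by
  have : IsEmpty (Fin (S.rk σ)) := by rw [hσ]; infer_instance
  simp only [RTree.leaf, WTA.h]
  rw [Fintype.sum_subsingleton _ fun i => (i.cast hσ).elim0, List.finRange_eq_nil_iff.mpr hσ,
    List.map_nil, List.prod_nil, one_mul]

theorem h_node₂ {σ : S.symb} (hσ : S.rk σ = 2) (t₀ t₁ : RTree S) (q : M.Q) :
    M.h (.node₂ σ hσ t₀ t₁) q =
      ∑ a, ∑ b, M.h t₀ a * M.h t₁ b * M.δ σ (fun i => ![a, b] (i.cast hσ)) q := by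
  let e : M.Q × M.Q ≃ (Fin (S.rk σ) → M.Q) :=
    (finTwoArrowEquiv M.Q).symm.trans (Equiv.arrowCongr (finCongr hσ.symm) (Equiv.refl _))
  simp only [RTree.node₂, WTA.h]
  rw [← e.sum_comp, Fintype.sum_prod_type]
  refine Fintype.sum_congr _ _ fun a => Fintype.sum_congr _ _ fun b => ?_
  have prod_two : ∀ k (hk : k = 2) (F : Fin 2 → B),
      ((List.finRange k).map fun i => F (i.cast hk)).prod = F 0 * F 1 := by
    rintro k rfl F
    simp [List.finRange_succ]
  rw [show e (a, b) = fun i => ![a, b] (i.cast hσ) from rfl,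
    prod_two _ hσ fun j => M.h (![t₀, t₁] j) (![a, b] j)]
  rfl

end WTA

namespace ClosureAutomaton

/-- `one` has weight `1` on every tree, `mark` recognises leaves, `idx j` recognises `comb j`. -/
inductive State (m : ℕ) : Type
  | one
  | val
  | sum
  | mark
  | idx (j : Fin m)
  deriving DecidableEq, Fintype

variable {m : ℕ}

theorem State.sum_univ {M : Type*} [AddCommMonoid M] (f : State m → M) :
    ∑ q, f q = f .one + (f .val + (f .sum + (f .mark + ∑ j, f (.idx j)))) := by
  have : (Finset.univ : Finset (State m)) =
      insert .one (insert .val (insert .sum (insert .mark (Finset.univ.image State.idx)))) := by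
    ext q; cases q <;> simp
  rw [this, Finset.sum_insert, Finset.sum_insert, Finset.sum_insert, Finset.sum_insert,
    Finset.sum_image fun _ _ _ _ => State.idx.inj] <;> simp

variable (w : Fin m → B)

def binWeight : State m → State m → State m → B
  | .val, .val, .val => 1
  | .sum, .mark, .val => 1
  | .mark, .idx j, .val => w j
  | .val, .one, .sum => 1
  | .one, .val, .sum => 1
  | .mark, .mark, .idx j => if (j : ℕ) = 0 then 1 else 0
  | .idx i, .mark, .idx j => if (j : ℕ) = i + 1 then 1 else 0
  | _, _, _ => 0

def delta (σ : S.symb) (qs : Fin (S.rk σ) → State m) (q : State m) : B :=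
  if q = .one then (if qs = fun _ => .one then 1 else 0)
  else if hσ : S.rk σ = 2 then binWeight w (qs (Fin.cast hσ.symm 0)) (qs (Fin.cast hσ.symm 1)) q
  else if S.rk σ = 0 ∧ q = .mark then 1
  else 0

abbrev automaton : WTA S B where
  Q := State m
  fintypeQ := inferInstance
  nonemptyQ := ⟨.one⟩
  δ := delta w
  F q := if q = .val then 1 else 0

variable {w}

theorem binWeight_mem_sbClosure {A : Set B} (hw : ∀ j, SBClosure A (w j)) (a b q : State m) :
    SBClosure A (binWeight w a b q) := by
  unfold binWeight
  split <;> (try split) <;> first | exact .one | exact .zero | exact hw _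

theorem delta_mem_sbClosure {A : Set B} (hw : ∀ j, SBClosure A (w j)) (σ : S.symb)
    (qs : Fin (S.rk σ) → State m) (q : State m) : SBClosure A (delta w σ qs q) := by
  unfold delta
  split_ifs <;> first | exact .one | exact .zero | exact binWeight_mem_sbClosure hw _ _ _

theorem h_one (t : RTree S) : (automaton w).h t .one = 1 :=
  (automaton w).h_eq_one (fun _ => by simp [delta])
    (fun _ _ hqs => (if_pos rfl).trans (if_neg hqs)) t

theorem initSem_eq (t : RTree S) : (automaton w).initSem t = (automaton w).h t .val :=
  (automaton w).initSem_eq_h (if_pos rfl) (fun _ hq => if_neg hq) t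

section Node₂

variable {β : S.symb} (hβ : S.rk β = 2) (t₀ t₁ : RTree S)

theorem h_node₂ {q : State m} (hq : q ≠ .one) : (automaton w).h (.node₂ β hβ t₀ t₁) q =
    ∑ a, ∑ b, (automaton w).h t₀ a * (automaton w).h t₁ b * binWeight w a b q := by
  simp [WTA.h_node₂, delta, hq, hβ]

theorem h_node₂_val : (automaton w).h (.node₂ β hβ t₀ t₁) .val =
    (automaton w).h t₀ .val * (automaton w).h t₁ .val +
      ((automaton w).h t₀ .sum * (automaton w).h t₁ .mark +
        ∑ j, (automaton w).h t₀ .mark * (automaton w).h t₁ (.idx j) * w j) := by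
  rw [h_node₂ hβ t₀ t₁ (by simp)]
  simp [State.sum_univ, binWeight]

theorem h_node₂_sum : (automaton w).h (.node₂ β hβ t₀ t₁) .sum =
    (automaton w).h t₀ .val + (automaton w).h t₁ .val := by
  rw [h_node₂ hβ t₀ t₁ (by simp)]
  simp [State.sum_univ, binWeight, h_one, add_comm]

theorem h_node₂_mark : (automaton w).h (.node₂ β hβ t₀ t₁) .mark = 0 := by
  rw [h_node₂ hβ t₀ t₁ (by simp)]
  simp [binWeight]

theorem h_node₂_idx_zero (hm : 0 < m) : (automaton w).h (.node₂ β hβ t₀ t₁) (.idx ⟨0, hm⟩) =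
    (automaton w).h t₀ .mark * (automaton w).h t₁ .mark := by
  rw [h_node₂ hβ t₀ t₁ (by simp)]
  simp [State.sum_univ, binWeight]

theorem h_node₂_idx_of_val_eq_succ {i j : Fin m} (hij : (j : ℕ) = i + 1) :
    (automaton w).h (.node₂ β hβ t₀ t₁) (.idx j) =
      (automaton w).h t₀ (.idx i) * (automaton w).h t₁ .mark := by
  rw [h_node₂ hβ t₀ t₁ (by simp)]
  simp [State.sum_univ, binWeight, hij, Fin.val_inj]

end Node₂

section Comb

variable {α β : S.symb} (hα : S.rk α = 0) (hβ : S.rk β = 2)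

theorem h_leaf (q : State m) :
    (automaton w).h (.leaf α hα) q = if q = .one ∨ q = .mark then 1 else 0 := by
  cases q
  case one => simp [h_one]
  all_goals simp [WTA.h_leaf, delta, hα]

def comb : ℕ → RTree S
  | 0 => .node₂ β hβ (.leaf α hα) (.leaf α hα)
  | n + 1 => .node₂ β hβ (comb n) (.leaf α hα)

theorem h_comb_mark (n : ℕ) : (automaton w).h (comb hα hβ n) .mark = 0 := by
  cases n <;> exact h_node₂_mark hβ _ _

theorem h_comb_idx : ∀ (n : ℕ) (j : Fin m),
    (automaton w).h (comb hα hβ n) (.idx j) = if (j : ℕ) = n then 1 else 0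
  | 0, ⟨0, _⟩ => by simp [comb, h_node₂_idx_zero, h_leaf]
  | n + 1, ⟨0, _⟩ => by simp [comb, h_node₂_idx_zero, h_comb_mark]
  | 0, ⟨k + 1, hk⟩ => by
    rw [comb, h_node₂_idx_of_val_eq_succ (i := ⟨k, Nat.lt_of_succ_lt hk⟩) hβ _ _ rfl]
    simp [h_leaf]
  | n + 1, ⟨k + 1, hk⟩ => by
    rw [comb, h_node₂_idx_of_val_eq_succ (i := ⟨k, Nat.lt_of_succ_lt hk⟩) hβ _ _ rfl,
      h_comb_idx n]
    simp [h_leaf]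

theorem h_const (j : Fin m) :
    (automaton w).h (.node₂ β hβ (.leaf α hα) (comb hα hβ j)) .val = w j := by
  simp [h_node₂_val, h_comb_mark, h_comb_idx, h_leaf, Fin.val_inj]

end Comb

theorem exists_h_val_eq {α β : S.symb} (hα : S.rk α = 0) (hβ : S.rk β = 2) {A : Set B}
    (hw : insert 0 (insert 1 A) ⊆ Set.range w) {b : B} (hb : SBClosure A b) :
    ∃ t₀ t₁, (automaton w).h (.node₂ β hβ t₀ t₁) .val = b := by
  have const {c : B} (hc : c ∈ insert 0 (insert 1 A)) :
      ∃ t₀ t₁, (automaton w).h (.node₂ β hβ t₀ t₁) .val = c := by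
    obtain ⟨j, rfl⟩ := hw hc
    exact ⟨_, _, h_const hα hβ j⟩
  induction hb with
  | base ha => exact const (by simp [ha])
  | zero => exact const (by simp)
  | one => exact const (by simp)
  | add _ _ ih₁ ih₂ =>
    obtain ⟨t₀, t₁, rfl⟩ := ih₁
    obtain ⟨s₀, s₁, rfl⟩ := ih₂
    refine ⟨.node₂ β hβ (.node₂ β hβ t₀ t₁) (.node₂ β hβ s₀ s₁), .leaf α hα, ?_⟩
    simp [h_node₂_val, h_node₂_sum, h_node₂_mark, h_leaf]
  | mul _ _ ih₁ ih₂ =>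
    obtain ⟨t₀, t₁, rfl⟩ := ih₁
    obtain ⟨s₀, s₁, rfl⟩ := ih₂
    refine ⟨.node₂ β hβ t₀ t₁, .node₂ β hβ s₀ s₁, ?_⟩
    simp [h_node₂_val, h_node₂_mark]

theorem range_initSem (hbin : ∃ σ, S.rk σ = 2) {A : Set B}
    (hw : Set.range w = insert 0 (insert 1 A)) :
    Set.range (automaton (S := S) w).initSem = {b | SBClosure A b} := by
  obtain ⟨α, hα⟩ := S.exists_nullary
  obtain ⟨β, hβ⟩ := hbin
  refine Set.Subset.antisymm ?_ fun b hb => ?_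
  · have hw' (j : Fin m) : SBClosure A (w j) := by
      obtain h | h | h : w j ∈ insert 0 (insert 1 A) := hw ▸ Set.mem_range_self j
      exacts [h ▸ .zero, h ▸ .one, .base h]
    rintro _ ⟨t, rfl⟩
    rw [Set.mem_ofPred_eq, initSem_eq]
    exact (automaton w).h_mem_sbClosure (delta_mem_sbClosure hw') t .val
  · obtain ⟨t₀, t₁, h⟩ := exists_h_val_eq hα hβ hw.superset hb
    exact ⟨_, (initSem_eq _).trans h⟩

end ClosureAutomaton

/-- If `Σ` contains a binary symbol and `A ⊆ B` is finite, then there is a wta `𝒜`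
over `Σ` and `B` with `im(⟦𝒜⟧_init) = ⟨A⟩_{⊕,⊗,0,1}`; in particular, if `B` is
generated by `A` then `im(⟦𝒜⟧_init) = B`. -/
theorem statement2 (S : RankedAlphabet) (hbin : ∃ σ, S.rk σ = 2)
    (B : Type) [StrongBimonoid B] (A : Set B) (hA : A.Finite) :
    ∃ M : WTA S B,
      Set.range M.initSem = {b : B | SBClosure A b} ∧
      ({b : B | SBClosure A b} = Set.univ → Set.range M.initSem = Set.univ) := by
  obtain ⟨m, w, hw⟩ := ((hA.insert 1).insert 0).fin_embedding
  have hrange := ClosureAutomaton.range_initSem hbin hw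
  exact ⟨ClosureAutomaton.automaton w, hrange, hrange.trans⟩
end

section
/- There exists a weakly locally finite strong bimonoid B such that for each ranked alphabet Σ which contains a binary symbol there exists a (Σ,B)-weighted tree automaton 𝒜 for which the image im(⟦𝒜⟧_init) of its initial algebra semantics is an infinite set. -/
variable {S : RankedAlphabet} {B : Type} [StrongBimonoid B]

/-!
The carrier consists of `0`, `1` and the finite sets of naturals; `⊕` is union (with
`1 ⊕ 1 = ∅`), and a product of two sets `s ⊗ u = {1, …, |u|}` only remembers the size of its
right factor. Hence every element of the weak closure of a finite `A` is `0`, `1` or a subset of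
the finite set `⋃_{a ∈ A} a ∪ {1, …, |a|}`. A tree automaton, however, multiplies two computed
values: with a state `false` of weight `1` on every tree and a state `true` computing
`h(σ(t, t)) = {0} ⊕ h(t) ⊗ h(t)` from `h(leaf) = {0}`, the perfect binary tree of height `n`
evaluates to `{0, …, n}`.
-/

open Finset

lemma insert_zero_Icc_one_eq_range (n : ℕ) : insert 0 (Icc 1 n) = range (n + 1) := by
  ext x
  simp
  omega

lemma WTA.h_node (M : WTA S B) (σ : S.symb) (ts : Fin (S.rk σ) → RTree S) (q : M.Q) :
    M.h (.node σ ts) q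
      = ∑ qs : Fin (S.rk σ) → M.Q,
          ((List.finRange (S.rk σ)).map fun i => M.h (ts i) (qs i)).prod * M.δ σ qs q := by
  rw [WTA.h]

inductive FinsetBimonoid : Type
  | zero
  | one
  | ofFinset (s : Finset ℕ)

namespace FinsetBimonoid

def support : FinsetBimonoid → Finset ℕ
  | ofFinset s => s
  | _ => ∅

protected def add : FinsetBimonoid → FinsetBimonoid → FinsetBimonoid
  | zero, b => b
  | a, zero => a
  | a, b => ofFinset (a.support ∪ b.support)

protected def mul : FinsetBimonoid → FinsetBimonoid → FinsetBimonoid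
  | zero, _ => zero
  | _, zero => zero
  | one, b => b
  | a, one => a
  | _, ofFinset u => ofFinset (Icc 1 #u)

instance : Zero FinsetBimonoid := ⟨zero⟩
instance : One FinsetBimonoid := ⟨one⟩
instance : Add FinsetBimonoid := ⟨FinsetBimonoid.add⟩
instance : Mul FinsetBimonoid := ⟨FinsetBimonoid.mul⟩

lemma add_def (a b : FinsetBimonoid) : a + b = a.add b := rfl
lemma mul_def (a b : FinsetBimonoid) : a * b = a.mul b := rfl

instance : StrongBimonoid FinsetBimonoid where
  add_assoc a b c := by
    cases a <;> cases b <;> cases c <;> simp [add_def, FinsetBimonoid.add, support, union_assoc]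
  zero_add a := rfl
  add_zero a := by cases a <;> rfl
  add_comm a b := by
    cases a <;> cases b <;> simp [add_def, FinsetBimonoid.add, support, union_comm]
  nsmul := nsmulRec
  mul_assoc a b c := by
    cases a <;> cases b <;> cases c <;> simp [mul_def, FinsetBimonoid.mul]
  one_mul a := by cases a <;> rfl
  mul_one a := by cases a <;> rfl
  zero_mul a := rfl
  mul_zero a := by cases a <;> rfl

@[simp] lemma zero_eq : zero = 0 := rfl
@[simp] lemma one_eq : one = 1 := rfl
@[simp] lemma ofFinset_add_ofFinset (s u : Finset ℕ) :
    ofFinset s + ofFinset u = ofFinset (s ∪ u) := rfl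
@[simp] lemma ofFinset_mul_ofFinset (s u : Finset ℕ) :
    ofFinset s * ofFinset u = ofFinset (Icc 1 #u) := rfl

lemma support_add (a b : FinsetBimonoid) : (a + b).support = a.support ∪ b.support := by
  cases a <;> cases b <;> simp [add_def, FinsetBimonoid.add, support]

lemma support_mul_subset (a b : FinsetBimonoid) :
    (a * b).support ⊆ a.support ∪ (b.support ∪ Icc 1 #b.support) := by
  cases a <;> cases b <;> intro x <;> simp +contextual [mul_def, FinsetBimonoid.mul, support]

lemma finite_setOf_support_subset (U : Finset ℕ) :
    {b : FinsetBimonoid | b.support ⊆ U}.Finite := by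
  refine (Set.toFinite ({0, 1} ∪ ofFinset '' (U.powerset : Set (Finset ℕ)))).subset ?_
  rintro (_ | _ | s) hs <;> simp_all [support]

lemma support_subset_of_weakClosure {A : Set FinsetBimonoid} {U : Finset ℕ}
    (hU : ∀ a ∈ A, a.support ∪ Icc 1 #a.support ⊆ U) {b : FinsetBimonoid}
    (hb : WeakClosure A b) : b.support ⊆ U := by
  induction hb with
  | base ha => exact subset_union_left.trans (hU _ ha)
  | zero | one => exact empty_subset U
  | add _ _ ihb ihb' => exact (support_add _ _).trans_subset (union_subset ihb ihb')
  | mulr _ ha ihb => exact (support_mul_subset _ _).trans (union_subset ihb (hU _ ha))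

theorem weaklyLocallyFinite_s4 : WeaklyLocallyFinite FinsetBimonoid := by
  classical
  intro A hA
  let bound (a : FinsetBimonoid) : Finset ℕ := a.support ∪ Icc 1 #a.support
  refine (finite_setOf_support_subset (hA.toFinset.biUnion bound)).subset fun b hb =>
    support_subset_of_weakClosure (fun a ha => ?_) hb
  exact subset_biUnion_of_mem bound (hA.mem_toFinset.2 ha)

abbrev countingWTA (S : RankedAlphabet) : WTA S FinsetBimonoid where
  Q := Bool
  fintypeQ := inferInstance
  nonemptyQ := ⟨false⟩
  δ _ qs q :=
    if qs = fun _ => false then (if q then ofFinset {0} else 1)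
    else if q ∧ qs = fun _ => true then 1 else 0
  F q := if q then 1 else 0

lemma countingWTA_h_leaf {σ : S.symb} (hσ : S.rk σ = 0) (ts : Fin (S.rk σ) → RTree S)
    (q : Bool) :
    (countingWTA S).h (.node σ ts) q = if q then ofFinset {0} else 1 := by
  have hqs : ∀ qs : Fin (S.rk σ) → Bool, qs = fun _ => false :=
    fun qs => funext fun i => absurd i.isLt (by omega)
  rw [WTA.h_node, Fintype.sum_eq_single (fun _ => false) fun qs hne => absurd (hqs qs) hne,
    List.eq_nil_of_length_eq_zero (l := List.finRange _) (by simp [hσ])]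
  simp

lemma countingWTA_h_node_const {σ : S.symb} (hσ : S.rk σ ≠ 0) {t : RTree S}
    (ht : (countingWTA S).h t false = 1) (q : Bool) :
    (countingWTA S).h (.node σ fun _ => t) q
      = if q then ofFinset {0} + (countingWTA S).h t true ^ S.rk σ else 1 := by
  have hne : (fun _ => false : Fin (S.rk σ) → Bool) ≠ fun _ => true :=
    fun h => Bool.false_ne_true (congrFun h ⟨0, Nat.pos_of_ne_zero hσ⟩)
  rw [WTA.h_node, Fintype.sum_eq_add _ _ hne]
  · cases q <;> simp [hne.symm, ht]
  · rintro qs ⟨hf, ht⟩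
    simp [hf, ht]

lemma countingWTA_initSem (t : RTree S) :
    (countingWTA S).initSem t = (countingWTA S).h t true := by
  simp [WTA.initSem]

def perfectTree {σ₀ : S.symb} (h₀ : S.rk σ₀ = 0) (σ : S.symb) : ℕ → RTree S
  | 0 => .node σ₀ fun i => absurd i.isLt (by omega)
  | n + 1 => .node σ fun _ => perfectTree h₀ σ n

lemma countingWTA_h_perfectTree {σ₀ σ : S.symb} (h₀ : S.rk σ₀ = 0) (hσ : S.rk σ = 2) (n : ℕ)
    (q : Bool) :
    (countingWTA S).h (perfectTree h₀ σ n) q = if q then ofFinset (range (n + 1)) else 1 := by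
  induction n generalizing q with
  | zero => simpa [perfectTree] using countingWTA_h_leaf h₀ _ q
  | succ n ih =>
    rw [perfectTree, countingWTA_h_node_const (by omega) (ih false), ih true, hσ]
    simp [sq, insert_zero_Icc_one_eq_range]

theorem infinite_range_countingWTA_initSem {σ : S.symb} (hσ : S.rk σ = 2) :
    (Set.range (countingWTA S).initSem).Infinite := by
  obtain ⟨σ₀, h₀⟩ := S.exists_nullary
  refine Set.infinite_of_injective_forall_mem (f := fun n => ofFinset (range (n + 1)))
    (fun m n hmn => by simpa using congrArg card (ofFinset.inj hmn))
    fun n => ⟨perfectTree h₀ σ n, ?_⟩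
  simp [countingWTA_initSem, countingWTA_h_perfectTree h₀ hσ]

end FinsetBimonoid

/-- There exists a weakly locally finite strong bimonoid `B` such that, for each
ranked alphabet containing a binary symbol, some wta over `Σ` and `B` has an
infinite image of its initial algebra semantics. -/
theorem statement4 :
    ∃ (B : Type) (inst : StrongBimonoid B),
      @WeaklyLocallyFinite B inst ∧
      ∀ S : RankedAlphabet, (∃ σ, S.rk σ = 2) →
        ∃ M : @WTA S B inst, (Set.range (@WTA.initSem S B inst M)).Infinite :=
  ⟨FinsetBimonoid, inferInstance, FinsetBimonoid.weaklyLocallyFinite_s4,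
    fun _ ⟨_, hσ⟩ => ⟨_, FinsetBimonoid.infinite_range_countingWTA_initSem hσ⟩⟩
end

section
/- Let B be a strong bimonoid. Then the following two statements are equivalent: (A) B is locally finite; (B) for each ranked alphabet Σ and for each (Σ,B)-weighted tree automaton 𝒜, the set im(⟦𝒜⟧_init) is finite. -/
variable {S : RankedAlphabet} {B : Type} [StrongBimonoid B]

/-! The weights computed by a wta are sums of products of its transition and final weights, so
`⟦𝒜⟧_init` takes values in the closure of the finitely many weights of `𝒜`. Conversely, the
closure of a finite set `A` lies in the image of a two-state wta that evaluates terms over the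
constants `A ∪ {0,1}` and the binary symbols `+`, `*`: in state `true` it computes the value
of the term, while state `false` gives every tree weight `1`, so that the transitions for `+`
can select one summand at a time without using distributivity. -/

namespace WTA

def weights (M : WTA S B) : Set B :=
  Set.range (fun p : Σ σ : S.symb, (Fin (S.rk σ) → M.Q) × M.Q => M.δ p.1 p.2.1 p.2.2) ∪
    Set.range M.F

theorem weights_finite (M : WTA S B) : M.weights.Finite :=
  (Set.finite_range _).union (Set.finite_range _)

theorem h_mem_closure (M : WTA S B) (t : RTree S) (q : M.Q) :
    SBClosure M.weights (M.h t q) := by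
  induction t generalizing q with
  | node σ ts ih =>
    rw [WTA.h]
    refine Finset.sum_induction _ _ (fun _ _ => .add) .zero fun qs _ => .mul ?_ ?_
    · refine List.prod_induction _ (fun _ _ => .mul) .one fun b hb => ?_
      obtain ⟨i, -, rfl⟩ := List.mem_map.mp hb
      exact ih i (qs i)
    · exact .base (Or.inl ⟨⟨σ, qs, q⟩, rfl⟩)

theorem range_initSem_subset_closure (M : WTA S B) :
    Set.range M.initSem ⊆ {b | SBClosure M.weights b} := by
  rintro _ ⟨t, rfl⟩
  exact Finset.sum_induction _ _ (fun _ _ => .add) .zero fun q _ =>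
    .mul (M.h_mem_closure t q) (.base (Or.inr ⟨q, rfl⟩))

end WTA

section TermEvaluation

variable [DecidableEq B] (A : Finset B)

/-- Nullary symbols are the constants in `A ∪ {0,1}`; the binary symbol `.inr false` stands
for `+` and `.inr true` for `*`. -/
abbrev termAlphabet : RankedAlphabet where
  symb := ↥(insert 0 (insert 1 A)) ⊕ Bool
  fintype_symb := inferInstance
  nonempty_symb := ⟨.inr true⟩
  rk := Sum.elim (fun _ => 0) (fun _ => 2)
  exists_nullary := ⟨.inl ⟨0, Finset.mem_insert_self _ _⟩, rfl⟩

def binaryGuard (isMul : Bool) (q₁ q₂ q : Bool) : Bool :=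
  if q then (if isMul then q₁ && q₂ else q₁ != q₂) else !q₁ && !q₂

def binaryWeight (isMul : Bool) (qs : Fin 2 → Bool) (q : Bool) : B :=
  if binaryGuard isMul (qs 0) (qs 1) q then 1 else 0

abbrev evalWTA : WTA (termAlphabet A) B where
  Q := Bool
  fintypeQ := inferInstance
  nonemptyQ := inferInstance
  δ
    | .inl c => fun _ q => if q then (c : B) else 1
    | .inr isMul => binaryWeight isMul
  F q := if q then 1 else 0

variable {A}

theorem evalWTA_h_const (c : ↥(insert 0 (insert 1 A))) (ts : Fin 0 → RTree (termAlphabet A))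
    (q : Bool) : (evalWTA A).h (.node (.inl c) ts) q = if q then (c : B) else 1 := by
  rw [WTA.h.eq_1 (evalWTA A) (.inl c) ts]
  exact (Fintype.sum_unique (ι := Fin 0 → Bool) _).trans (by simp [evalWTA])

theorem evalWTA_h_binary (isMul : Bool) (ts : Fin 2 → RTree (termAlphabet A)) (q : Bool) :
    (evalWTA A).h (.node (.inr isMul) ts) q =
      ∑ p : Bool × Bool, (evalWTA A).h (ts 0) p.1 * (evalWTA A).h (ts 1) p.2 *
        if binaryGuard isMul p.1 p.2 q then 1 else 0 := by
  rw [WTA.h.eq_1 (evalWTA A) (.inr isMul) ts]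
  refine Fintype.sum_equiv (finTwoArrowEquiv Bool) _ _ fun qs => ?_
  simp [evalWTA, binaryWeight, List.finRange_succ]

theorem evalWTA_h_false (t : RTree (termAlphabet A)) : (evalWTA A).h t false = 1 := by
  induction t with
  | node σ ts ih =>
    rcases σ with c | isMul
    · exact evalWTA_h_const c ts false
    · rw [evalWTA_h_binary isMul ts]
      simp [Fintype.sum_prod_type, binaryGuard, ih (0 : Fin 2), ih (1 : Fin 2)]

theorem evalWTA_initSem (t : RTree (termAlphabet A)) :
    (evalWTA A).initSem t = (evalWTA A).h t true := by
  simp [WTA.initSem, evalWTA]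

theorem closure_subset_range_evalWTA_initSem :
    {b | SBClosure (A : Set B) b} ⊆ Set.range (evalWTA A).initSem := by
  intro b hb
  simp only [Set.mem_range, evalWTA_initSem]
  induction hb with
  | @base a ha => exact ⟨.node (.inl ⟨a, by simp_all⟩) Fin.elim0, by simp [evalWTA_h_const]⟩
  | zero => exact ⟨.node (.inl ⟨0, by simp⟩) Fin.elim0, by simp [evalWTA_h_const]⟩
  | one => exact ⟨.node (.inl ⟨1, by simp⟩) Fin.elim0, by simp [evalWTA_h_const]⟩
  | add _ _ ih ih' =>
    obtain ⟨t, rfl⟩ := ih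
    obtain ⟨t', rfl⟩ := ih'
    refine ⟨.node (.inr false) ![t, t'], ?_⟩
    simp [evalWTA_h_binary, Fintype.sum_prod_type, binaryGuard, evalWTA_h_false]
  | mul _ _ ih ih' =>
    obtain ⟨t, rfl⟩ := ih
    obtain ⟨t', rfl⟩ := ih'
    refine ⟨.node (.inr true) ![t, t'], ?_⟩
    simp [evalWTA_h_binary, Fintype.sum_prod_type, binaryGuard]

end TermEvaluation

/-- `B` is locally finite iff for every ranked alphabet `Σ` and every wta `𝒜` over
`Σ` and `B`, the image of the initial algebra semantics of `𝒜` is finite. -/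
theorem statement7 (B : Type) [StrongBimonoid B] :
    SBLocallyFinite B ↔
      ∀ (S : RankedAlphabet) (M : WTA S B), (Set.range M.initSem).Finite := by
  classical
  refine ⟨fun hlf S M => (hlf _ M.weights_finite).subset M.range_initSem_subset_closure,
    fun hfin A hA => ?_⟩
  lift A to Finset B using hA
  exact (hfin _ (evalWTA A)).subset closure_subset_range_evalWTA_initSem
end

section
/- Let B be a strong bimonoid such that for each monadic ranked alphabet Σ and each (Σ,B)-weighted tree automaton 𝒜, the set im(⟦𝒜⟧_init) is finite. Then B is bi-locally finite. -/
variable {S : RankedAlphabet} {B : Type} [StrongBimonoid B]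

/-!
Both closures are realised as images of the semantics of wta over the monadic alphabet with one
unary symbol per generator: a word `a₁ ⋯ aₙ` becomes the chain tree `a₁(⋯ aₙ(#))`. A one-state
wta multiplies the weights of the letters along the chain, and a two-state wta sums them.
Finiteness of these images bounds the closures.
-/

def chainAlphabet (A : Type) [Fintype A] : RankedAlphabet where
  symb := Option A
  fintype_symb := inferInstance
  nonempty_symb := ⟨none⟩
  rk := fun o => o.elim 0 fun _ => 1
  exists_nullary := ⟨none, rfl⟩

variable {A : Type} [Fintype A]

def chainTree : List A → RTree (chainAlphabet A)
  | [] => .node (S := chainAlphabet A) none Fin.elim0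
  | a :: l => .node (S := chainAlphabet A) (some a) fun _ => chainTree l

theorem chainAlphabet_rk_le_one (σ : (chainAlphabet A).symb) : (chainAlphabet A).rk σ ≤ 1 := by
  cases σ <;> simp [chainAlphabet]

namespace WTA

theorem h_chainTree_nil (M : WTA (chainAlphabet A) B) (q : M.Q) :
    M.h (chainTree []) q = M.δ none Fin.elim0 q := by
  change ∑ qs : Fin 0 → M.Q, ((List.finRange 0).map fun i => M.h i.elim0 (qs i)).prod
    * M.δ none qs q = _
  simp [Subsingleton.elim _ (Fin.elim0 : Fin 0 → M.Q)]

theorem h_chainTree_cons (M : WTA (chainAlphabet A) B) (a : A) (l : List A) (q : M.Q) :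
    M.h (chainTree (a :: l)) q = ∑ p, M.h (chainTree l) p * M.δ (some a) (fun _ => p) q := by
  change ∑ qs : Fin 1 → M.Q, ((List.finRange 1).map fun i => M.h (chainTree l) (qs i)).prod
    * M.δ (some a) qs q = _
  refine Fintype.sum_equiv (Equiv.funUnique (Fin 1) M.Q) _ _ fun qs => ?_
  have hqs : qs = fun _ => qs 0 := funext fun i => congrArg qs (Subsingleton.elim i 0)
  rw [hqs]
  simp [List.finRange_succ]
  rfl

variable (B) in
abbrev chainProd (f : A → B) : WTA (chainAlphabet A) B where
  Q := Unit
  fintypeQ := inferInstance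
  nonemptyQ := inferInstance
  δ := fun σ _ _ => σ.elim 1 f
  F := fun _ => 1

variable (B) in
/-- A run stays in state `false` (weight `1`) up to one position, where it switches to `true`
with weight `f a`; so the runs on `chainTree l` enumerate the summands of `(l.map f).sum`. -/
abbrev chainSum (f : A → B) : WTA (chainAlphabet A) B where
  Q := Bool
  fintypeQ := inferInstance
  nonemptyQ := inferInstance
  δ := fun σ => match σ with
    | none => fun _ q => if q then 0 else 1
    | some a => fun qs q =>
      if q then (if qs ⟨0, Nat.one_pos⟩ then 1 else f a) else (if qs ⟨0, Nat.one_pos⟩ then 0 else 1)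
  F := fun q => if q then 1 else 0

theorem chainProd_h (f : A → B) (q : Unit) :
    ∀ l : List A, (chainProd B f).h (chainTree l) q = (l.reverse.map f).prod
  | [] => by
    rw [h_chainTree_nil]
    rfl
  | a :: l => by
    rw [h_chainTree_cons, Fintype.sum_unique, chainProd_h f q l]
    simp

theorem chainSum_h (f : A → B) : ∀ l : List A,
    (chainSum B f).h (chainTree l) false = 1 ∧ (chainSum B f).h (chainTree l) true = (l.map f).sum
  | [] => ⟨h_chainTree_nil _ _, h_chainTree_nil _ _⟩
  | a :: l => by
    obtain ⟨h_false, h_true⟩ := chainSum_h f l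
    simp only [h_chainTree_cons, Fintype.sum_bool]
    simp [chainSum, h_false, h_true, add_comm]

theorem chainProd_initSem (f : A → B) (l : List A) :
    (chainProd B f).initSem (chainTree l.reverse) = (l.map f).prod := by
  simp [WTA.initSem, chainProd_h, chainProd]

theorem chainSum_initSem (f : A → B) (l : List A) :
    (chainSum B f).initSem (chainTree l) = (l.map f).sum := by
  simp [WTA.initSem, (chainSum_h f l).2, chainSum]

theorem closure_range_subset_range_chainProd_initSem (f : A → B) :
    (Submonoid.closure (Set.range f) : Set B) ⊆ Set.range (chainProd B f).initSem := by
  rw [← FreeMonoid.mrange_lift]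
  rintro _ ⟨w, rfl⟩
  exact ⟨chainTree w.toList.reverse, by rw [chainProd_initSem, FreeMonoid.lift_apply]⟩

theorem closure_range_subset_range_chainSum_initSem (f : A → B) :
    (AddSubmonoid.closure (Set.range f) : Set B) ⊆ Set.range (chainSum B f).initSem := by
  rw [← FreeAddMonoid.mrange_lift]
  rintro _ ⟨w, rfl⟩
  exact ⟨chainTree w.toList, by rw [chainSum_initSem, FreeAddMonoid.lift_apply]⟩

end WTA

/-- If for each monadic ranked alphabet `Σ` and each wta `𝒜` over `Σ` and `B` the image
of the initial algebra semantics is finite, then `B` is bi-locally finite. -/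
theorem statement10 (B : Type) [StrongBimonoid B]
    (h : ∀ S : RankedAlphabet, (∀ σ, S.rk σ ≤ 1) →
      ∀ M : WTA S B, (Set.range M.initSem).Finite) :
    BiLocallyFinite B := by
  constructor
  · intro s hs
    have : Fintype s := hs.fintype
    have hsub := WTA.closure_range_subset_range_chainSum_initSem ((↑) : s → B)
    rw [Subtype.range_coe] at hsub
    exact (h _ chainAlphabet_rk_le_one _).subset hsub
  · intro s hs
    have : Fintype s := hs.fintype
    have hsub := WTA.closure_range_subset_range_chainProd_initSem ((↑) : s → B)
    rw [Subtype.range_coe] at hsub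
    exact (h _ chainAlphabet_rk_le_one _).subset hsub
end

section
/- Let B be a right-distributive strong bimonoid. Then B is bi-locally finite if and only if B is weakly locally finite. -/
/-! Right-distributivity lets right multiplication by a generator pass through sums, so `wcl(A)`
lies in the additive closure of the multiplicative closure of `A`, which is finite when `B` is
bi-locally finite. Conversely `wcl(A)` contains the additive closure of `A` and, since right
multiplication by a product of generators is an iterated `mulr` step, also its multiplicative
closure. -/

section WeakClosure

variable {B : Type*} [StrongBimonoid B] {A : Set B}

theorem WeakClosure.mul_mem_of_mem_submonoidClosure {b c : B} (hc : WeakClosure A c)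
    (hb : b ∈ Submonoid.closure A) : WeakClosure A (c * b) := by
  induction hb using Submonoid.closure_induction generalizing c with
  | mem a ha => exact hc.mulr ha
  | one => simpa using hc
  | mul x y _ _ hx hy => simpa only [mul_assoc] using hy (hx hc)

theorem submonoidClosure_subset_weakClosure :
    (Submonoid.closure A : Set B) ⊆ {b | WeakClosure A b} := fun b hb => by
  simpa using WeakClosure.one.mul_mem_of_mem_submonoidClosure hb

theorem addSubmonoidClosure_subset_weakClosure :
    (AddSubmonoid.closure A : Set B) ⊆ {b | WeakClosure A b} := fun b hb => by
  induction hb using AddSubmonoid.closure_induction with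
  | mem a ha => exact .base ha
  | zero => exact .zero
  | add _ _ _ _ hx hy => exact hx.add hy

theorem mul_mem_addSubmonoidClosure_of_forall_mul_mem (hrd : SBRightDistributive B) {S : Set B}
    {a x : B} (hS : ∀ s ∈ S, s * a ∈ S) (hx : x ∈ AddSubmonoid.closure S) :
    x * a ∈ AddSubmonoid.closure S := by
  induction hx using AddSubmonoid.closure_induction with
  | mem s hs => exact AddSubmonoid.subset_closure (hS s hs)
  | zero => simp
  | add x y _ _ hx hy => rw [hrd x y a]; exact add_mem hx hy

theorem weakClosure_subset_addSubmonoidClosure_submonoidClosure (hrd : SBRightDistributive B) :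
    {b | WeakClosure A b} ⊆
      (AddSubmonoid.closure (Submonoid.closure A : Set B) : Set B) := fun b hb => by
  induction hb with
  | base ha => exact AddSubmonoid.subset_closure (Submonoid.subset_closure ha)
  | zero => exact zero_mem _
  | one => exact AddSubmonoid.subset_closure (one_mem _)
  | add _ _ hx hy => exact add_mem hx hy
  | mulr _ ha hb =>
    exact mul_mem_addSubmonoidClosure_of_forall_mul_mem hrd
      (fun _ hs => mul_mem hs (Submonoid.subset_closure ha)) hb

theorem WeaklyLocallyFinite.addLocallyFinite (h : WeaklyLocallyFinite B) : AddLocallyFinite B :=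
  fun A hA => (h A hA).subset addSubmonoidClosure_subset_weakClosure

theorem WeaklyLocallyFinite.mulLocallyFinite (h : WeaklyLocallyFinite B) : MulLocallyFinite B :=
  fun A hA => (h A hA).subset submonoidClosure_subset_weakClosure

theorem BiLocallyFinite.weaklyLocallyFinite (hrd : SBRightDistributive B) (h : BiLocallyFinite B) :
    WeaklyLocallyFinite B := fun A hA =>
  (h.1 _ (h.2 A hA)).subset (weakClosure_subset_addSubmonoidClosure_submonoidClosure hrd)

end WeakClosure

/-- For a right-distributive strong bimonoid, bi-local finiteness and weak local
finiteness coincide. -/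
theorem statement12 (B : Type*) [StrongBimonoid B] (hrd : SBRightDistributive B) :
    BiLocallyFinite B ↔ WeaklyLocallyFinite B :=
  ⟨BiLocallyFinite.weaklyLocallyFinite hrd, fun h => ⟨h.addLocallyFinite, h.mulLocallyFinite⟩⟩
end

section
/- Let B be an almost idempotent strong bimonoid. Then B is additively locally finite; indeed, for each finite subset A⊆B, the submonoid of (B,⊕,0) generated by A consists of all finite sums of elements from A in which each summand occurs at most twice, and hence is finite. -/
/-! Since `3 • b = 2 • b`, every multiple `n • b` equals `min n 2 • b`. An element of the additive
closure of `A` is a finite sum `∑ nₐ • a` over `a ∈ A`, so capping every coefficient at `2` does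
not change it, and there are only finitely many capped coefficient vectors supported on a finite
`A`. -/

section

variable {M : Type*} [AddCommMonoid M]

theorem AddSubmonoid.mem_closure_iff_exists_finsupp_sum {A : Set M} {b : M} :
    b ∈ AddSubmonoid.closure A ↔
      ∃ f : M →₀ ℕ, ↑f.support ⊆ A ∧ b = f.sum fun x n => n • x := by
  rw [← Submodule.span_nat_eq_addSubmonoidClosure, Submodule.mem_toAddSubmonoid, ← Set.image_id A,
    Finsupp.span_image_eq_map_linearCombination]
  simp only [Submodule.mem_map, Finsupp.mem_supported, Finsupp.linearCombination_apply, id,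
    Set.image_id', eq_comm]

theorem min_two_nsmul_of_add_add_self (h : ∀ b : M, b + b + b = b + b) (b : M) (n : ℕ) :
    min n 2 • b = n • b := by
  induction n with
  | zero => simp
  | succ n ih =>
    rcases Nat.lt_or_ge n 2 with hn | hn
    · rw [min_eq_left (by omega)]
    · rw [succ_nsmul, ← ih, min_eq_right hn, min_eq_right (by omega : 2 ≤ n + 1), two_nsmul, h]

theorem AddSubmonoid.coe_closure_eq_sums_le_two (h : ∀ b : M, b + b + b = b + b) (A : Set M) :
    (AddSubmonoid.closure A : Set M) =
      {b : M | ∃ f : M →₀ ℕ, ↑f.support ⊆ A ∧ (∀ x, f x ≤ 2) ∧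
        b = f.sum fun x n => n • x} := by
  ext b
  simp only [SetLike.mem_coe, AddSubmonoid.mem_closure_iff_exists_finsupp_sum, Set.mem_ofPred_eq]
  constructor
  · rintro ⟨f, hfA, rfl⟩
    refine ⟨f.mapRange (min · 2) (by simp), ?_, fun x => by simp, ?_⟩
    · exact (Finset.coe_subset.mpr Finsupp.support_mapRange).trans hfA
    · rw [Finsupp.sum_mapRange_index (by simp)]
      exact Finsupp.sum_congr fun x _ => (min_two_nsmul_of_add_add_self h x _).symm
  · rintro ⟨f, hfA, -, rfl⟩
    exact ⟨f, hfA, rfl⟩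

theorem Set.Finite.finite_sums_le_two {A : Set M} (hA : A.Finite) :
    {b : M | ∃ f : M →₀ ℕ, ↑f.support ⊆ A ∧ (∀ x, f x ≤ 2) ∧
      b = f.sum fun x n => n • x}.Finite := by
  classical
  let bound : M →₀ ℕ := Finsupp.indicator hA.toFinset fun _ _ => 2
  refine ((Set.finite_Iic bound).image fun f => f.sum fun x n => n • x).subset ?_
  rintro b ⟨f, hfA, hf2, rfl⟩
  refine ⟨f, fun x => ?_, rfl⟩
  by_cases hx : x ∈ A
  · simpa [bound, Finsupp.indicator_apply, hx] using hf2 x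
  · simp [Finsupp.notMem_support_iff.mp fun hf => hx (hfA hf)]

end

/-- An almost idempotent strong bimonoid is additively locally finite: for each finite
`A ⊆ B`, the additive submonoid generated by `A` consists of all finite sums of elements
of `A` in which each summand occurs at most twice, and hence is finite. -/
theorem statement13 (B : Type*) [StrongBimonoid B] (h : AlmostIdempotent B) :
    AddLocallyFinite B ∧
    ∀ A : Set B, A.Finite →
      ((AddSubmonoid.closure A : Set B) =
        {b : B | ∃ f : B →₀ ℕ, ↑f.support ⊆ A ∧ (∀ x, f x ≤ 2) ∧
          b = f.sum fun x n => n • x}) ∧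
      (AddSubmonoid.closure A : Set B).Finite := by
  have hclosure := AddSubmonoid.coe_closure_eq_sums_le_two h
  have hfinite : AddLocallyFinite B := fun A hA => hclosure A ▸ hA.finite_sums_le_two
  exact ⟨hfinite, fun A hA => ⟨hclosure A, hfinite A hA⟩⟩
end

section
/- Let X be a nonempty set and let p,q,r∈S(X)∖{0_S,1_S}. Then: (a) p×_S(q×_S r) is large; (b) if p is large, then p+_S q, p×_S q, and q×_S p are also large. -/
/-- Terms over the ranked alphabet `Σ = {+⁽²⁾, ×⁽²⁾, 0⁽⁰⁾, 1⁽⁰⁾}` and the set `X`. -/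
inductive STerm (X : Type) : Type
  | zero : STerm X
  | one : STerm X
  | var (x : X) : STerm X
  | add (s t : STerm X) : STerm X
  | mul (s t : STerm X) : STerm X

namespace STerm

/-- `t.ok` holds iff `t` contains no occurrence of `0`, no subterm `1 × t'` and no
subterm `t' × 1`. -/
def ok {X : Type} : STerm X → Prop
  | zero => False
  | one => True
  | var _ => True
  | add s t => ok s ∧ ok t
  | mul s t => ok s ∧ ok t ∧ s ≠ one ∧ t ≠ one

/-- A term is simple if it is `0`, or it is different from `0` and contains no `0`,
no subterm of the form `1 × t'` and no subterm of the form `t' × 1`. -/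
def Simple {X : Type} (t : STerm X) : Prop := t = zero ∨ ok t

end STerm

/-- The set `ST_Σ(X)` of simple terms. -/
def SimpleT (X : Type) : Type := {t : STerm X // t.Simple}

open Classical in
/-- The addition `+_ST` on simple terms: `t + 0 = 0 + t = t` and `s + t = add s t` otherwise. -/
noncomputable def stAdd {X : Type} (s t : SimpleT X) : SimpleT X :=
  if hs : s.1 = STerm.zero then t
  else if ht : t.1 = STerm.zero then s
  else ⟨STerm.add s.1 t.1, Or.inr ⟨s.2.resolve_left hs, t.2.resolve_left ht⟩⟩

open Classical in
/-- The multiplication `×_ST` on simple terms: `t × 0 = 0 × t = 0`, `t × 1 = 1 × t = t`,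
and `s × t = mul s t` otherwise. -/
noncomputable def stMul {X : Type} (s t : SimpleT X) : SimpleT X :=
  if h0 : s.1 = STerm.zero ∨ t.1 = STerm.zero then ⟨STerm.zero, Or.inl rfl⟩
  else if hs : s.1 = STerm.one then t
  else if ht : t.1 = STerm.one then s
  else ⟨STerm.mul s.1 t.1,
    Or.inr ⟨s.2.resolve_left (fun h => h0 (Or.inl h)),
      t.2.resolve_left (fun h => h0 (Or.inr h)), hs, ht⟩⟩

/-- The simple term `0`. -/
def stZero {X : Type} : SimpleT X := ⟨STerm.zero, Or.inl rfl⟩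

/-- The simple term `1`. -/
def stOne {X : Type} : SimpleT X := ⟨STerm.one, Or.inr trivial⟩

/-- The congruence `≈_E` on `ST_Σ(X)` induced by the identities
`e₁ : z₁+(z₂+z₃) = (z₁+z₂)+z₃`, `e₂ : z₁+z₂ = z₂+z₁`, `e₃ : z₁×(z₂×z₃) = (z₁×z₂)×z₃`,
`e₄ : z₁+z₁ = z₁+(z₁+z₁)`, `e₅ : (z₁+z₂)×z₃ = (z₁×z₃)+(z₂×z₃)`:
the smallest congruence containing all instances of these identities. -/
inductive eqE {X : Type} : SimpleT X → SimpleT X → Prop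
  | addAssoc (a b c : SimpleT X) : eqE (stAdd a (stAdd b c)) (stAdd (stAdd a b) c)
  | addComm (a b : SimpleT X) : eqE (stAdd a b) (stAdd b a)
  | mulAssoc (a b c : SimpleT X) : eqE (stMul a (stMul b c)) (stMul (stMul a b) c)
  | almostIdem (a : SimpleT X) : eqE (stAdd a a) (stAdd a (stAdd a a))
  | rightDistrib (a b c : SimpleT X) :
      eqE (stMul (stAdd a b) c) (stAdd (stMul a c) (stMul b c))
  | refl (a : SimpleT X) : eqE a a
  | symm {a b : SimpleT X} : eqE a b → eqE b a
  | trans {a b c : SimpleT X} : eqE a b → eqE b c → eqE a c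
  | addCongr {a b c d : SimpleT X} : eqE a b → eqE c d → eqE (stAdd a c) (stAdd b d)
  | mulCongr {a b c d : SimpleT X} : eqE a b → eqE c d → eqE (stMul a c) (stMul b d)

instance stSetoid (X : Type) : Setoid (SimpleT X) :=
  ⟨eqE, ⟨eqE.refl, eqE.symm, eqE.trans⟩⟩

/-- The quotient algebra `S(X) = ST_Σ(X)/≈_E`. -/
def SX (X : Type) : Type := Quotient (stSetoid X)

/-- The addition `+_S` of `S(X)`. -/
noncomputable def sAdd {X : Type} : SX X → SX X → SX X :=
  Quotient.map₂ stAdd fun _ _ h1 _ _ h2 => eqE.addCongr h1 h2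

/-- The multiplication `×_S` of `S(X)`. -/
noncomputable def sMul {X : Type} : SX X → SX X → SX X :=
  Quotient.map₂ stMul fun _ _ h1 _ _ h2 => eqE.mulCongr h1 h2

/-- The element `0_S` of `S(X)`. -/
def sZero (X : Type) : SX X := ⟦stZero⟧

/-- The element `1_S` of `S(X)`. -/
def sOne (X : Type) : SX X := ⟦stOne⟧

namespace STerm

/-- Whether a term is of the form `t₁ × t₂`. -/
def isMul {X : Type} : STerm X → Prop
  | mul _ _ => True
  | _ => False

/-- Whether a term has a subterm of the form `t₁×(t₂×t₃)` or `(t₁×t₂)×t₃`. -/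
def nested {X : Type} : STerm X → Prop
  | add s t => nested s ∨ nested t
  | mul s t => isMul s ∨ isMul t ∨ nested s ∨ nested t
  | _ => False

end STerm

/-- An element `p ∈ S(X) ∖ {0_S, 1_S}` is large if `p = [s]_E` for some simple term `s`
having a subterm of the form `t₁×(t₂×t₃)` or `(t₁×t₂)×t₃`. -/
def Large {X : Type} (p : SX X) : Prop :=
  p ≠ sZero X ∧ p ≠ sOne X ∧ ∃ s : SimpleT X, p = ⟦s⟧ ∧ s.1.nested

/-- The relation `∼la`: `q ∼la r` iff `q = r` or both `q` and `r` are large. -/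
def simLa {X : Type} (q r : SX X) : Prop := q = r ∨ (Large q ∧ Large r)

/-
Both parts reduce to representatives, because `≈_E` never relates `0` or `1` to any
other simple term: each identity in `E` holds in the three-element quotient `{0, 1, other}`.
A representative of an element outside `{0_S, 1_S}` is therefore neither `0` nor `1`, so
`+_ST` and `×_ST` act on such representatives as the bare constructors, and the resulting
term visibly contains a nested product.
-/

section

variable {X : Type}

namespace SimpleT

theorem stAdd_val_eq_zero_iff (a b : SimpleT X) :
    (stAdd a b).1 = .zero ↔ a.1 = .zero ∧ b.1 = .zero := by
  unfold stAdd; split_ifs <;> simp_all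

theorem stAdd_val_eq_one_iff (a b : SimpleT X) :
    (stAdd a b).1 = .one ↔ a.1 = .zero ∧ b.1 = .one ∨ a.1 = .one ∧ b.1 = .zero := by
  unfold stAdd; split_ifs <;> simp_all

theorem stMul_val_eq_zero_iff (a b : SimpleT X) :
    (stMul a b).1 = .zero ↔ a.1 = .zero ∨ b.1 = .zero := by
  unfold stMul; grind [stZero]

theorem stMul_val_eq_one_iff (a b : SimpleT X) :
    (stMul a b).1 = .one ↔ a.1 = .one ∧ b.1 = .one := by
  unfold stMul; grind [stZero]

theorem stAdd_val {a b : SimpleT X} (ha : a.1 ≠ .zero) (hb : b.1 ≠ .zero) :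
    (stAdd a b).1 = .add a.1 b.1 := by
  unfold stAdd; split_ifs <;> simp_all

theorem stMul_val {a b : SimpleT X} (ha₀ : a.1 ≠ .zero) (ha₁ : a.1 ≠ .one)
    (hb₀ : b.1 ≠ .zero) (hb₁ : b.1 ≠ .one) :
    (stMul a b).1 = .mul a.1 b.1 := by
  unfold stMul; split_ifs <;> simp_all

end SimpleT

open SimpleT

theorem eqE.val_eq_zero_iff_and_val_eq_one_iff {s t : SimpleT X} (h : eqE s t) :
    (s.1 = .zero ↔ t.1 = .zero) ∧ (s.1 = .one ↔ t.1 = .one) := by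
  induction h with
  | refl => exact ⟨Iff.rfl, Iff.rfl⟩
  | symm _ ih => exact ⟨ih.1.symm, ih.2.symm⟩
  | trans _ _ ih₁ ih₂ => exact ⟨ih₁.1.trans ih₂.1, ih₁.2.trans ih₂.2⟩
  | _ =>
    simp only [stAdd_val_eq_zero_iff, stAdd_val_eq_one_iff, stMul_val_eq_zero_iff,
      stMul_val_eq_one_iff] at *
    grind

theorem mk_eq_sZero_iff {a : SimpleT X} : (⟦a⟧ : SX X) = sZero X ↔ a.1 = .zero :=
  ⟨fun h => ((Quotient.exact h).val_eq_zero_iff_and_val_eq_one_iff).1.mpr rfl,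
    fun h => congrArg _ (Subtype.ext h)⟩

theorem mk_eq_sOne_iff {a : SimpleT X} : (⟦a⟧ : SX X) = sOne X ↔ a.1 = .one :=
  ⟨fun h => ((Quotient.exact h).val_eq_zero_iff_and_val_eq_one_iff).2.mpr rfl,
    fun h => congrArg _ (Subtype.ext h)⟩

theorem STerm.nested.ne_zero {t : STerm X} (h : t.nested) : t ≠ .zero := by
  rintro rfl; exact h

theorem STerm.nested.ne_one {t : STerm X} (h : t.nested) : t ≠ .one := by
  rintro rfl; exact h

theorem large_mk_of_nested {s : SimpleT X} (h : s.1.nested) : Large (⟦s⟧ : SX X) :=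
  ⟨mt mk_eq_sZero_iff.mp h.ne_zero, mt mk_eq_sOne_iff.mp h.ne_one, s, rfl, h⟩

theorem exists_rep_of_ne_sZero_of_ne_sOne {p : SX X} (hp : p ≠ sZero X ∧ p ≠ sOne X) :
    ∃ a : SimpleT X, ⟦a⟧ = p ∧ a.1 ≠ .zero ∧ a.1 ≠ .one := by
  obtain ⟨a, rfl⟩ := Quotient.exists_rep p
  exact ⟨a, rfl, mt mk_eq_sZero_iff.mpr hp.1, mt mk_eq_sOne_iff.mpr hp.2⟩

theorem large_sMul_sMul {p q r : SX X} (hp : p ≠ sZero X ∧ p ≠ sOne X)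
    (hq : q ≠ sZero X ∧ q ≠ sOne X) (hr : r ≠ sZero X ∧ r ≠ sOne X) :
    Large (sMul p (sMul q r)) := by
  obtain ⟨a, rfl, ha₀, ha₁⟩ := exists_rep_of_ne_sZero_of_ne_sOne hp
  obtain ⟨b, rfl, hb₀, hb₁⟩ := exists_rep_of_ne_sZero_of_ne_sOne hq
  obtain ⟨c, rfl, hc₀, hc₁⟩ := exists_rep_of_ne_sZero_of_ne_sOne hr
  have hbc := stMul_val hb₀ hb₁ hc₀ hc₁
  have habc : (stMul a (stMul b c)).1 = .mul a.1 (.mul b.1 c.1) := by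
    rw [stMul_val ha₀ ha₁ (by rw [hbc]; nofun) (by rw [hbc]; nofun), hbc]
  exact large_mk_of_nested (habc ▸ Or.inr (Or.inl trivial))

namespace Large

variable {p q : SX X}

theorem sAdd (hp : Large p) (hq : q ≠ sZero X) : Large (sAdd p q) := by
  obtain ⟨-, -, s, rfl, hs⟩ := hp
  obtain ⟨b, rfl⟩ := Quotient.exists_rep q
  exact large_mk_of_nested (stAdd_val hs.ne_zero (mt mk_eq_sZero_iff.mpr hq) ▸ Or.inl hs)

theorem sMul_right (hp : Large p) (hq : q ≠ sZero X ∧ q ≠ sOne X) : Large (sMul p q) := by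
  obtain ⟨-, -, s, rfl, hs⟩ := hp
  obtain ⟨b, rfl, hb₀, hb₁⟩ := exists_rep_of_ne_sZero_of_ne_sOne hq
  exact large_mk_of_nested <|
    stMul_val hs.ne_zero hs.ne_one hb₀ hb₁ ▸ Or.inr (Or.inr (Or.inl hs))

theorem sMul_left (hp : Large p) (hq : q ≠ sZero X ∧ q ≠ sOne X) : Large (sMul q p) := by
  obtain ⟨-, -, s, rfl, hs⟩ := hp
  obtain ⟨b, rfl, hb₀, hb₁⟩ := exists_rep_of_ne_sZero_of_ne_sOne hq
  exact large_mk_of_nested <|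
    stMul_val hb₀ hb₁ hs.ne_zero hs.ne_one ▸ Or.inr (Or.inr (Or.inr hs))

end Large

end

theorem statement17_general (X : Type) (p q r : SX X)
    (hp : p ≠ sZero X ∧ p ≠ sOne X)
    (hq : q ≠ sZero X ∧ q ≠ sOne X)
    (hr : r ≠ sZero X ∧ r ≠ sOne X) :
    Large (sMul p (sMul q r)) ∧
    (Large p → Large (sAdd p q) ∧ Large (sMul p q) ∧ Large (sMul q p)) :=
  ⟨large_sMul_sMul hp hq hr, fun hl => ⟨hl.sAdd hq.1, hl.sMul_right hq, hl.sMul_left hq⟩⟩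

/-- Let `p, q, r ∈ S(X) ∖ {0_S, 1_S}`. Then (a) `p ×_S (q ×_S r)` is large, and
(b) if `p` is large, then `p +_S q`, `p ×_S q` and `q ×_S p` are large. -/
theorem statement17 (X : Type) (hX : Nonempty X) (p q r : SX X)
    (hp : p ≠ sZero X ∧ p ≠ sOne X)
    (hq : q ≠ sZero X ∧ q ≠ sOne X)
    (hr : r ≠ sZero X ∧ r ≠ sOne X) :
    Large (sMul p (sMul q r)) ∧
    (Large p → Large (sAdd p q) ∧ Large (sMul p q) ∧ Large (sMul q p)) :=
  statement17_general X p q r hp hq hr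
end
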